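/- arXiv:2507.04128 — 3 statements merged into one kernel-verified Lean document; each statement's English description precedes it below -/
import Mathlib

section
/- Let k ≥ 2, n = 3k − 3, and let 𝒱 ⊆ M_n(ℂ) be the span of the three diagonal projections A_1 = diag(I_{k−1}, 0, 0), A_2 = diag(0, I_{k−1}, 0), A_3 = diag(0, 0, I_{k−1}) (each block of size (k−1) × (k−1)). Then 𝒱 is an operator system and there is no rank-k projection P ∈ M_n(ℂ) with P 𝒱 P = span{P}; that is, 𝒱 has no k-anticlique. -/
/-!
A rank-`k` projection `P` with `P 𝒱 P = span {P}` sends each `Aᵢ` to a scalar multiple of `P`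
of rank at most `rank Aᵢ = k - 1 < k = rank P`, hence to `0`. Since `A₁ + A₂ + A₃ = 1`, this
forces `P = P * 1 * P = 0`, contradicting `rank P = k ≥ 1`.
-/

open Matrix

section Compression

variable {K n : Type*} [Field K] [Fintype n]

theorem Matrix.rank_mul_mul_le_middle (P B Q : Matrix n n K) : (P * B * Q).rank ≤ B.rank :=
  (rank_mul_le_left _ _).trans (rank_mul_le_right _ _)

theorem Matrix.eq_zero_of_mem_span_singleton_of_rank_lt {M P : Matrix n n K}
    (hM : M ∈ Submodule.span K {P}) (hrank : M.rank < P.rank) : M = 0 := by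
  obtain ⟨c, rfl⟩ := Submodule.mem_span_singleton.mp hM
  rcases eq_or_ne c 0 with rfl | hc
  · exact zero_smul K P
  · rw [rank_smul_of_mem_nonZeroDivisors P (mem_nonZeroDivisors_of_ne_zero hc)] at hrank
    exact absurd hrank (lt_irrefl _)

theorem Matrix.eq_zero_of_compression_eq_span [DecidableEq n] {ι : Type*}
    {V : Submodule K (Matrix n n K)} {P : Matrix n n K} (hPP : P * P = P)
    (hV : (fun A => P * A * P) '' (V : Set (Matrix n n K)) = Submodule.span K {P})
    (s : Finset ι) (B : ι → Matrix n n K) (hBV : ∀ i ∈ s, B i ∈ V)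
    (hB : ∑ i ∈ s, B i = 1) (hrank : ∀ i ∈ s, (B i).rank < P.rank) : P = 0 := by
  have hcompress : ∀ i ∈ s, P * B i * P = 0 := fun i hi =>
    eq_zero_of_mem_span_singleton_of_rank_lt (hV ▸ ⟨B i, hBV i hi, rfl⟩ : _ ∈ (_ : Set _))
      ((rank_mul_mul_le_middle _ _ _).trans_lt (hrank i hi))
  calc P = P * (∑ i ∈ s, B i) * P := by rw [hB, mul_one, hPP]
    _ = ∑ i ∈ s, P * B i * P := by rw [Finset.mul_sum, Finset.sum_mul]
    _ = 0 := Finset.sum_eq_zero hcompress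

theorem Matrix.rank_diagonal_indicator_le {m : ℕ} (q : Fin m → Prop) [DecidablePred q] {a b : ℕ}
    (hq : ∀ p, q p → a ≤ (p : ℕ) ∧ (p : ℕ) < b) :
    (diagonal fun p => if q p then (1 : K) else 0).rank ≤ b - a := by
  classical
  rw [rank_diagonal, ← Nat.card_Ico, ← Fintype.card_coe]
  refine Fintype.card_le_of_injective
    (fun p => ⟨p.1, Finset.mem_Ico.mpr (hq _ (of_not_not fun h => p.2 (if_neg h)))⟩) ?_
  intro p p' h
  exact Subtype.ext (Fin.ext (congrArg Subtype.val h))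

end Compression

theorem Matrix.isHermitian_diagonal_indicator {R n : Type*} [Semiring R] [StarRing R]
    [DecidableEq n] (q : n → Prop) [DecidablePred q] :
    (diagonal fun p => if q p then (1 : R) else 0).IsHermitian :=
  isHermitian_diagonal_of_self_adjoint _ <| funext fun p => by
    rw [Pi.star_apply]; split_ifs <;> simp

theorem Matrix.conjTranspose_mem_span_of_isHermitian {R n : Type*} [CommRing R] [StarRing R]
    {S : Set (Matrix n n R)} (hS : ∀ B ∈ S, B.IsHermitian) {A : Matrix n n R}
    (hA : A ∈ Submodule.span R S) : Aᴴ ∈ Submodule.span R S := by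
  induction hA using Submodule.span_induction with
  | mem B hB => rw [hS B hB]; exact Submodule.subset_span hB
  | zero => rw [conjTranspose_zero]; exact zero_mem _
  | add _ _ _ _ h₁ h₂ => rw [conjTranspose_add]; exact add_mem h₁ h₂
  | smul _ _ _ h => rw [conjTranspose_smul]; exact Submodule.smul_mem _ _ h

open Matrix in
theorem stmt_6 (k : ℕ) (hk : 2 ≤ k)
    (A₁ A₂ A₃ : Matrix (Fin (3 * k - 3)) (Fin (3 * k - 3)) ℂ)
    (hA₁ : A₁ = Matrix.diagonal (fun (p : Fin (3 * k - 3)) => if (p : ℕ) < k - 1 then 1 else 0))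
    (hA₂ : A₂ = Matrix.diagonal (fun (p : Fin (3 * k - 3)) =>
      if k - 1 ≤ (p : ℕ) ∧ (p : ℕ) < 2 * (k - 1) then 1 else 0))
    (hA₃ : A₃ = Matrix.diagonal (fun (p : Fin (3 * k - 3)) => if 2 * (k - 1) ≤ (p : ℕ) then 1 else 0))
    (V : Submodule ℂ (Matrix (Fin (3 * k - 3)) (Fin (3 * k - 3)) ℂ))
    (hV : V = Submodule.span ℂ {A₁, A₂, A₃}) :
    ((1 : Matrix (Fin (3 * k - 3)) (Fin (3 * k - 3)) ℂ) ∈ V ∧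
      (∀ A ∈ V, Aᴴ ∈ V)) ∧
    ¬ ∃ P : Matrix (Fin (3 * k - 3)) (Fin (3 * k - 3)) ℂ,
        Pᴴ = P ∧ P * P = P ∧ P.rank = k ∧
        (fun A => P * A * P) '' (V : Set (Matrix (Fin (3 * k - 3)) (Fin (3 * k - 3)) ℂ)) =
          (Submodule.span ℂ {P} :
            Submodule ℂ (Matrix (Fin (3 * k - 3)) (Fin (3 * k - 3)) ℂ)) := by
  have hsum : A₁ + A₂ + A₃ = 1 := by
    rw [hA₁, hA₂, hA₃, diagonal_add, diagonal_add, ← diagonal_one]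
    congr 1
    funext p
    have := p.isLt
    split_ifs <;> first | omega | norm_num
  have hAV : ∀ i, ![A₁, A₂, A₃] i ∈ V := by
    intro i
    fin_cases i <;> exact hV ▸ Submodule.subset_span (by simp)
  have hrank : ∀ i, (![A₁, A₂, A₃] i).rank ≤ k - 1 := by
    intro i
    fin_cases i
    · exact hA₁ ▸ (rank_diagonal_indicator_le (fun p : Fin (3 * k - 3) => (p : ℕ) < k - 1)
        (a := 0) fun p hp => ⟨p.1.zero_le, hp⟩).trans (by omega)
    · exact hA₂ ▸ (rank_diagonal_indicator_le
        (fun p : Fin (3 * k - 3) => k - 1 ≤ (p : ℕ) ∧ (p : ℕ) < 2 * (k - 1)) fun _ hp => hp).trans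
          (by omega)
    · exact hA₃ ▸ (rank_diagonal_indicator_le (fun p : Fin (3 * k - 3) => 2 * (k - 1) ≤ (p : ℕ))
        (b := 3 * k - 3) fun p hp => ⟨hp, p.isLt⟩).trans (by omega)
  refine ⟨⟨hsum ▸ add_mem (add_mem (hAV 0) (hAV 1)) (hAV 2), fun A hA => ?_⟩, ?_⟩
  · subst hV
    refine conjTranspose_mem_span_of_isHermitian ?_ hA
    rintro B (rfl | rfl | rfl) <;> simp only [hA₁, hA₂, hA₃, isHermitian_diagonal_indicator]
  · rintro ⟨P, -, hPP, hPrank, himg⟩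
    have hP : P = 0 := eq_zero_of_compression_eq_span hPP himg Finset.univ ![A₁, A₂, A₃]
      (fun i _ => hAV i) (by rw [Fin.sum_univ_three]; exact hsum)
      fun i _ => by rw [hPrank]; exact (hrank i).trans_lt (by omega)
    rw [hP, rank_zero] at hPrank
    omega
end

section
/- For every k ≥ 2 there exists an operator system 𝒱 ⊆ M_{3k−3}(ℂ) with no 2-clique and no k-anticlique. Combined with the fact that every operator system in M_n(ℂ) with n ≥ 3k − 2 has a 2-clique or a k-anticlique, this shows the quantum Ramsey number QR(2,k) equals 3k − 2. -/
open Matrix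

-- In M_n(C): V has a 2-clique.
def HasTwoClique (n : ℕ) (V : Submodule ℂ (Matrix (Fin n) (Fin n) ℂ)) : Prop :=
  ∃ P : Matrix (Fin n) (Fin n) ℂ, Pᴴ = P ∧ P * P = P ∧ P.rank = 2 ∧
    (fun A => P * A * P) '' (V : Set (Matrix (Fin n) (Fin n) ℂ)) =
      (fun A => P * A * P) '' Set.univ

-- In M_n(C): V has a k-anticlique.
def HasAnticlique (n k : ℕ) (V : Submodule ℂ (Matrix (Fin n) (Fin n) ℂ)) : Prop :=
  ∃ P : Matrix (Fin n) (Fin n) ℂ, Pᴴ = P ∧ P * P = P ∧ P.rank = k ∧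
    (fun A => P * A * P) '' (V : Set (Matrix (Fin n) (Fin n) ℂ)) =
      (Submodule.span ℂ {P} : Submodule ℂ (Matrix (Fin n) (Fin n) ℂ))

def IsOperatorSystem (n : ℕ) (V : Submodule ℂ (Matrix (Fin n) (Fin n) ℂ)) : Prop :=
  (1 : Matrix (Fin n) (Fin n) ℂ) ∈ V ∧ ∀ A ∈ V, Aᴴ ∈ V

/-!
Take `A = diag(1, …, 1, i, …, i, -i, …, -i)` with three blocks of size `m = k - 1` and
`𝒱 = span {1, A, A*}` in `M_{3m}(ℂ)`.

A rank-two projection `P` compresses `M_n` onto a copy of `M_2`, of dimension `4 > dim 𝒱`,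
so `𝒱` has no 2-clique. If `P` were a rank-`k` anticlique, then `PAP = cP`, so
`⟪Au, u⟫ = c ‖u‖²` for every `u ∈ ran P`. As `dim ran P = m + 1`, for each eigenvalue `λ` of `A`
some `u ≠ 0` in `ran P` vanishes on the `λ`-eigenspace, which puts `c` on the segment joining the
other two eigenvalues. But the three sides of the triangle `1, i, -i` have no common point.
-/

open Module Finset Complex

theorem Submodule.exists_ne_zero_forall_eq_zero_of_card_lt_finrank {K ι : Type*} [Field K]
    [Fintype ι] {S : Submodule K (ι → K)} {T : Finset ι} (hT : #T < finrank K S) :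
    ∃ u ∈ S, u ≠ 0 ∧ ∀ i ∈ T, u i = 0 := by
  let restrict : S →ₗ[K] (T → K) := LinearMap.funLeft K K (Subtype.val : T → ι) ∘ₗ S.subtype
  have hdim : finrank K (T → K) < finrank K S := by simpa using hT
  obtain ⟨u, hu, hu0⟩ := (Submodule.ne_bot_iff _).1 (restrict.ker_ne_bot_of_finrank_lt hdim)
  exact ⟨u, u.2, by simpa using hu0, fun i hi => congrFun hu ⟨i, hi⟩⟩

theorem Fin.card_filter_le_of_forall_mem_Ico {n a m : ℕ} {p : Fin n → Prop} [DecidablePred p]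
    (h : ∀ i, p i → a ≤ i.val ∧ i.val < a + m) : #{i | p i} ≤ m :=
  calc #{i | p i} ≤ #(Ico a (a + m)) :=
        card_le_card_of_injOn Fin.val (fun i hi => by simpa using h i (by simpa using hi))
          Fin.val_injective.injOn
    _ = m := by simp

theorem Complex.segment_I_neg_I_inter_segment_one_neg_I_inter_segment_one_I :
    segment ℝ I (-I) ∩ segment ℝ 1 (-I) ∩ segment ℝ 1 I = ∅ := by
  refine Set.eq_empty_of_forall_notMem ?_
  rintro _ ⟨⟨⟨a₀, b₀, -, -, -, rfl⟩, ⟨a₁, b₁, -, -, hab₁, h₁⟩⟩, ⟨a₂, b₂, -, -, hab₂, h₂⟩⟩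
  have hre₁ := congrArg re h₁
  have him₁ := congrArg im h₁
  have hre₂ := congrArg re h₂
  have him₂ := congrArg im h₂
  simp only [real_smul, mul_one, smul_neg, add_re, ofReal_re, neg_re, mul_re, I_re, mul_zero,
    ofReal_im, I_im, sub_self, neg_zero, add_zero, add_im, neg_im, mul_im, zero_add]
    at hre₁ him₁ hre₂ him₂
  linarith

theorem mem_convexHull_of_star_dotProduct_diagonal {ι : Type*} [Fintype ι] [DecidableEq ι]
    {d u : ι → ℂ} {c : ℂ} (hu : u ≠ 0) (h : star u ⬝ᵥ (diagonal d *ᵥ u) = c * (star u ⬝ᵥ u)) :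
    c ∈ convexHull ℝ (d '' {i | u i ≠ 0}) := by
  classical
  set w : ι → ℝ := fun i => normSq (u i)
  have hw : ∀ i, star (u i) * u i = (w i : ℂ) := fun i => by
    rw [star_def, mul_comm, mul_conj]
  have hnum : star u ⬝ᵥ (diagonal d *ᵥ u) = ∑ i, w i • d i := by
    simp only [dotProduct, mulVec_diagonal, Pi.star_apply, real_smul]
    exact Finset.sum_congr rfl fun i _ => by rw [← hw]; ring
  have hden : star u ⬝ᵥ u = ((∑ i, w i : ℝ) : ℂ) := by
    simp only [dotProduct, Pi.star_apply, hw, ofReal_sum]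
  have hpos : 0 < ∑ i, w i := by
    obtain ⟨i, hi⟩ := Function.ne_iff.1 hu
    exact Finset.sum_pos' (fun i _ => normSq_nonneg _) ⟨i, mem_univ _, normSq_pos.2 hi⟩
  have hc : c = univ.centerMass w d := by
    have : ((∑ i, w i : ℝ) : ℂ) ≠ 0 := ofReal_ne_zero.2 hpos.ne'
    rw [Finset.centerMass, ← hnum, h, hden, real_smul, ofReal_inv]
    field_simp
  rw [hc, ← Finset.centerMass_filter_ne_zero]
  refine Finset.centerMass_mem_convexHull _ (fun i _ => normSq_nonneg _) ?_ ?_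
  · rwa [Finset.sum_filter_ne_zero]
  · intro i hi
    exact ⟨i, fun hui => (mem_filter.1 hi).2 (by simp [w, hui]), rfl⟩

namespace Matrix

variable {m K : Type*} [Fintype m] [Field K]

theorem mulVec_eq_self_of_mem_range {P : Matrix m m K} (hP : P * P = P) {u : m → K}
    (hu : u ∈ LinearMap.range P.mulVecLin) : P *ᵥ u = u := by
  obtain ⟨w, rfl⟩ := hu
  simp only [mulVecLin_apply, mulVec_mulVec, hP]

theorem star_dotProduct_mulVec_eq_of_mul_mul_eq_smul [StarRing K] {P A : Matrix m m K} {c : K}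
    (hP : Pᴴ = P) (hPAP : P * A * P = c • P) {u : m → K} (hu : P *ᵥ u = u) :
    star u ⬝ᵥ (A *ᵥ u) = c * (star u ⬝ᵥ u) := by
  have hstar : star u ᵥ* P = star u := by rw [← hP, ← star_mulVec, hu]
  calc star u ⬝ᵥ (A *ᵥ u) = star u ⬝ᵥ ((P * A * P) *ᵥ u) := by
        rw [← mulVec_mulVec, ← mulVec_mulVec, hu, dotProduct_mulVec (star u) P, hstar]
    _ = c * (star u ⬝ᵥ u) := by rw [hPAP, smul_mulVec, hu, dotProduct_smul, smul_eq_mul]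

theorem exists_mulVec_injective_mul_eq_self [DecidableEq m] {P : Matrix m m K}
    (hP : P * P = P) :
    ∃ M : Matrix m (Fin P.rank) K, Function.Injective M.mulVec ∧ P * M = M := by
  let S := LinearMap.range P.mulVecLin
  let f : (Fin P.rank → K) →ₗ[K] m → K :=
    S.subtype ∘ₗ (Module.finBasis K S).equivFun.symm.toLinearMap
  refine ⟨LinearMap.toMatrix' f, fun v w hvw => ?_, mulVec_injective (funext fun v => ?_)⟩
  · rw [LinearMap.toMatrix'_mulVec, LinearMap.toMatrix'_mulVec] at hvw
    exact (Module.finBasis K S).equivFun.symm.injective (Subtype.val_injective hvw)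
  · rw [← mulVec_mulVec, LinearMap.toMatrix'_mulVec]
    exact mulVec_eq_self_of_mem_range hP (SetLike.coe_mem _)

section Injective

variable {n r : Type*} [Fintype r] {M : Matrix n r K}

theorem mul_right_injective_of_mulVec_injective {l : Type*} (hM : Function.Injective M.mulVec) :
    Function.Injective fun X : Matrix r l K => M * X :=
  fun _ _ h => ext_col fun j => hM congr(($h).col j)

theorem mul_mul_conjTranspose_injective [StarRing K] (hM : Function.Injective M.mulVec) :
    Function.Injective fun C : Matrix r r K => M * C * Mᴴ := by
  intro C D h
  have h₁ : C * Mᴴ = D * Mᴴ :=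
    mul_right_injective_of_mulVec_injective hM (by simpa only [Matrix.mul_assoc] using h)
  have h₂ : M * Cᴴ = M * Dᴴ := by
    simpa only [conjTranspose_mul, conjTranspose_conjTranspose] using congrArg conjTranspose h₁
  simpa using mul_right_injective_of_mulVec_injective hM h₂

end Injective

theorem sq_rank_le_finrank_range_mulLeftRight [StarRing K] [DecidableEq m] {P : Matrix m m K}
    (hP₁ : Pᴴ = P) (hP₂ : P * P = P) :
    P.rank ^ 2 ≤ finrank K (LinearMap.range (LinearMap.mulLeftRight K (P, P))) := by
  obtain ⟨M, hM, hPM⟩ := exists_mulVec_injective_mul_eq_self hP₂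
  have hMP : Mᴴ * P = Mᴴ := by
    simpa only [conjTranspose_mul, hP₁] using congrArg conjTranspose hPM
  let f := mulRightLinearMap m K Mᴴ ∘ₗ mulLeftLinearMap (Fin P.rank) K M
  have hf : LinearMap.range f ≤ LinearMap.range (LinearMap.mulLeftRight K (P, P)) := by
    rintro _ ⟨C, rfl⟩
    refine ⟨f C, ?_⟩
    simp only [f, LinearMap.mulLeftRight_apply, LinearMap.coe_comp, Function.comp_apply,
      mulLeftLinearMap_apply, mulRightLinearMap_apply, ← Matrix.mul_assoc, hPM]
    rw [Matrix.mul_assoc, hMP]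
  calc P.rank ^ 2 = finrank K (LinearMap.range f) := by
        rw [LinearMap.finrank_range_of_inj (mul_mul_conjTranspose_injective hM), finrank_matrix,
          Fintype.card_fin, finrank_self, mul_one, sq]
    _ ≤ _ := Submodule.finrank_mono hf

end Matrix

section OperatorSystem

variable {n : ℕ}

theorem isOperatorSystem_span {s : Set (Matrix (Fin n) (Fin n) ℂ)} (h₁ : 1 ∈ s)
    (hs : ∀ A ∈ s, Aᴴ ∈ s) : IsOperatorSystem n (Submodule.span ℂ s) := by
  refine ⟨Submodule.subset_span h₁, fun A hA => ?_⟩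
  induction hA using Submodule.span_induction with
  | mem x hx => exact Submodule.subset_span (hs x hx)
  | zero => simp
  | add x y _ _ hx hy => simpa only [conjTranspose_add] using add_mem hx hy
  | smul c x _ hx => simpa only [conjTranspose_smul] using Submodule.smul_mem _ (star c) hx

theorem not_hasTwoClique_of_finrank_lt {V : Submodule ℂ (Matrix (Fin n) (Fin n) ℂ)}
    (hV : finrank ℂ V < 4) : ¬ HasTwoClique n V := by
  rintro ⟨P, hP₁, hP₂, hPr, himg⟩
  let L := LinearMap.mulLeftRight ℂ (P, P)
  have hL : ⇑L = fun A => P * A * P := funext fun A => LinearMap.mulLeftRight_apply P P A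
  have hVL : V.map L = LinearMap.range L := SetLike.coe_injective <| by
    rw [Submodule.map_coe, LinearMap.coe_range, hL, himg, Set.image_univ]
  have : 4 ≤ finrank ℂ V :=
    calc 4 = P.rank ^ 2 := by norm_num [hPr]
      _ ≤ finrank ℂ (LinearMap.range L) := Matrix.sq_rank_le_finrank_range_mulLeftRight hP₁ hP₂
      _ = finrank ℂ (V.map L) := by rw [hVL]
      _ ≤ finrank ℂ V := Submodule.finrank_map_le L V
  omega

theorem not_hasAnticlique_of_diagonal_mem {k : ℕ} {V : Submodule ℂ (Matrix (Fin n) (Fin n) ℂ)}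
    {d : Fin n → ℂ} (hd : ∀ i, d i = 1 ∨ d i = I ∨ d i = -I) (h₁ : #{i | d i = 1} < k)
    (hI : #{i | d i = I} < k) (hnegI : #{i | d i = -I} < k) (hA : diagonal d ∈ V) :
    ¬ HasAnticlique n k V := by
  rintro ⟨P, hP₁, hP₂, hPr, himg⟩
  have hmem : P * diagonal d * P ∈ Submodule.span ℂ {P} := by
    rw [← SetLike.mem_coe, ← himg]
    exact ⟨_, hA, rfl⟩
  obtain ⟨c, hc⟩ := Submodule.mem_span_singleton.1 hmem
  have hseg : ∀ z a b, #{i | d i = z} < k → (∀ i, d i ≠ z → d i = a ∨ d i = b) →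
      c ∈ segment ℝ a b := by
    intro z a b hz hab
    obtain ⟨u, hu, hu0, hvanish⟩ :=
      Submodule.exists_ne_zero_forall_eq_zero_of_card_lt_finrank (hPr ▸ hz)
    have hdot := Matrix.star_dotProduct_mulVec_eq_of_mul_mul_eq_smul hP₁ hc.symm
      (Matrix.mulVec_eq_self_of_mem_range hP₂ hu)
    rw [← convexHull_pair]
    refine convexHull_mono ?_ (mem_convexHull_of_star_dotProduct_diagonal hu0 hdot)
    rintro _ ⟨i, hi, rfl⟩
    exact hab i fun hiz => hi (hvanish i (by simpa using hiz))
  refine (Set.eq_empty_iff_forall_notMem.1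
    segment_I_neg_I_inter_segment_one_neg_I_inter_segment_one_I) c ⟨⟨?_, ?_⟩, ?_⟩
  · exact hseg 1 I (-I) h₁ fun i hi => by have := hd i; tauto
  · exact hseg I 1 (-I) hI fun i hi => by have := hd i; tauto
  · exact hseg (-I) 1 I hnegI fun i hi => by have := hd i; tauto

end OperatorSystem

def blockEigenvalue (m : ℕ) {n : ℕ} (i : Fin n) : ℂ :=
  if i.val < m then 1 else if i.val < 2 * m then I else -I

def ramseySystem (m n : ℕ) : Submodule ℂ (Matrix (Fin n) (Fin n) ℂ) :=
  Submodule.span ℂ {1, diagonal (blockEigenvalue m), (diagonal (blockEigenvalue m))ᴴ}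

section RamseySystem

variable {m n : ℕ}

theorem isOperatorSystem_ramseySystem : IsOperatorSystem n (ramseySystem m n) :=
  isOperatorSystem_span (by simp) (by simp [or_comm])

theorem not_hasTwoClique_ramseySystem : ¬ HasTwoClique n (ramseySystem m n) := by
  classical
  refine not_hasTwoClique_of_finrank_lt ((finrank_span_le_card _).trans_lt ?_)
  simp only [Set.toFinset_insert, Set.toFinset_singleton]
  exact Finset.card_le_three.trans_lt (by norm_num)

theorem not_hasAnticlique_ramseySystem {k : ℕ} (hn : n = 3 * m) (hk : m < k) :
    ¬ HasAnticlique n k (ramseySystem m n) := by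
  refine not_hasAnticlique_of_diagonal_mem (d := blockEigenvalue m) (fun i => ?_)
    ((Fin.card_filter_le_of_forall_mem_Ico (a := 0) fun i hi => ?_).trans_lt hk)
    ((Fin.card_filter_le_of_forall_mem_Ico (a := m) fun i hi => ?_).trans_lt hk)
    ((Fin.card_filter_le_of_forall_mem_Ico (a := 2 * m) fun i hi => ?_).trans_lt hk)
    (Submodule.subset_span (by simp))
  all_goals
    unfold blockEigenvalue at *
    split_ifs at * <;> first | omega | exact absurd hi (by norm_num [Complex.ext_iff]) | simp

end RamseySystem

theorem stmt_10 (k : ℕ) (hk : 2 ≤ k)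
    (existenceHalf : ∀ n : ℕ, 3 * k - 2 ≤ n →
      ∀ V : Submodule ℂ (Matrix (Fin n) (Fin n) ℂ), IsOperatorSystem n V →
        HasTwoClique n V ∨ HasAnticlique n k V) :
    (∃ V : Submodule ℂ (Matrix (Fin (3 * k - 3)) (Fin (3 * k - 3)) ℂ),
      IsOperatorSystem (3 * k - 3) V ∧
      ¬ HasTwoClique (3 * k - 3) V ∧ ¬ HasAnticlique (3 * k - 3) k V) ∧
    IsLeast {N : ℕ | ∀ n : ℕ, N ≤ n →
      ∀ V : Submodule ℂ (Matrix (Fin n) (Fin n) ℂ), IsOperatorSystem n V →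
        HasTwoClique n V ∨ HasAnticlique n k V} (3 * k - 2) := by
  have hn : 3 * k - 3 = 3 * (k - 1) := by omega
  have hno₂ := not_hasTwoClique_ramseySystem (m := k - 1) (n := 3 * k - 3)
  have hnoₖ := not_hasAnticlique_ramseySystem hn (show k - 1 < k by omega)
  refine ⟨⟨ramseySystem (k - 1) _, isOperatorSystem_ramseySystem, hno₂, hnoₖ⟩, existenceHalf,
    fun N hN => ?_⟩
  by_contra! hlt
  rcases hN (3 * k - 3) (by omega) _ isOperatorSystem_ramseySystem with h | h
  exacts [hno₂ h, hnoₖ h]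
end

section
/- Assume the Li–Poon–Sze theorem: if n ≥ 3k − 2, then for every A ∈ M_n(ℂ) there is an isometry J ∈ M_{n×k}(ℂ) with J* A J scalar. Then for every nonnegative integer ℓ, every operator system 𝒱 ⊆ M_n(ℂ) with dim 𝒱 ≤ 2ℓ + 1 has a k-anticlique whenever n > 3^ℓ (k − 1). -/
/-!
Induct on `l`, proving that some isometry `J : n × k` compresses `V` (via `X ↦ Jᴴ X J`) into the
scalars; then `P = J Jᴴ` is the anticlique. For `l = 0`, `V` is the scalars. If `dim V ≤ 2l + 3`,
writing elements of `V` as `H₁ + i H₂` with `H₁, H₂ ∈ V` Hermitian gives `A ∈ V` with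
`dim span {1, A, Aᴴ} ≥ min 3 (dim V)`. Li–Poon–Sze provides an isometry `J₁ : n × m`,
`m = 3 ^ l (k - 1) + 1`, compressing `A`, hence all of `span {1, A, Aᴴ}`, to scalars. By
rank–nullity the compressed operator system in `M_m` has dimension at most `2l + 1`, so the
induction hypothesis applies there, and compressions compose.
-/

open Matrix Module Submodule
open scoped ComplexStarModule

section Compress

variable {R ι κ μ : Type*} [CommSemiring R] [StarRing R] [Fintype ι]

def Matrix.compress (J : Matrix ι κ R) : Matrix ι ι R →ₗ[R] Matrix κ κ R where
  toFun X := Jᴴ * X * J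
  map_add' X Y := by simp only [Matrix.mul_add, Matrix.add_mul]
  map_smul' c X := by simp only [Matrix.mul_smul, Matrix.smul_mul, RingHom.id_apply]

@[simp]
lemma Matrix.compress_apply (J : Matrix ι κ R) (X : Matrix ι ι R) : J.compress X = Jᴴ * X * J :=
  rfl

lemma Matrix.compress_one [DecidableEq ι] [DecidableEq κ] {J : Matrix ι κ R} (hJ : Jᴴ * J = 1) :
    J.compress 1 = 1 := by
  rw [compress_apply, Matrix.mul_one, hJ]

lemma Matrix.compress_conjTranspose (J : Matrix ι κ R) (X : Matrix ι ι R) :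
    J.compress Xᴴ = (J.compress X)ᴴ := by
  simp only [compress_apply, conjTranspose_mul, conjTranspose_conjTranspose, Matrix.mul_assoc]

lemma Matrix.compress_mul [Fintype κ] (J₁ : Matrix ι κ R) (J₂ : Matrix κ μ R) :
    (J₁ * J₂).compress = J₂.compress ∘ₗ J₁.compress := by
  ext X : 1
  simp only [compress_apply, LinearMap.comp_apply, conjTranspose_mul, Matrix.mul_assoc]

end Compress

lemma Submodule.finrank_map_add_finrank_inf_ker {K M N : Type*} [DivisionRing K]
    [AddCommGroup M] [Module K M] [AddCommGroup N] [Module K N] [FiniteDimensional K M]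
    (f : M →ₗ[K] N) (S : Submodule K M) :
    finrank K (S.map f) + finrank K ↥(S ⊓ LinearMap.ker f) = finrank K S := by
  rw [← LinearMap.range_domRestrict, ← map_comap_subtype, ← LinearMap.ker_domRestrict,
    finrank_map_subtype_eq]
  exact LinearMap.finrank_range_add_finrank_ker _

lemma Submodule.finrank_map_add_finrank_le {K M N : Type*} [DivisionRing K]
    [AddCommGroup M] [Module K M] [AddCommGroup N] [Module K N] [FiniteDimensional K M]
    [FiniteDimensional K N] (f : M →ₗ[K] N) {S T : Submodule K M} {L : Submodule K N}
    (hST : S ≤ T) (hS : S.map f ≤ L) :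
    finrank K (T.map f) + finrank K S ≤ finrank K T + finrank K L := by
  have hT := finrank_map_add_finrank_inf_ker f T
  have hS' := finrank_map_add_finrank_inf_ker f S
  have hker := finrank_mono (inf_le_inf_right (LinearMap.ker f) hST)
  have hL := finrank_mono hS
  omega

lemma Matrix.exists_conjTranspose_mul_self_eq_one {R ι κ : Type*} [Semiring R] [StarRing R]
    [Fintype ι] [DecidableEq ι] [DecidableEq κ] (e : κ ↪ ι) :
    ∃ J : Matrix ι κ R, Jᴴ * J = 1 := by
  refine ⟨(1 : Matrix ι ι R).submatrix id e, ?_⟩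
  rw [conjTranspose_submatrix, conjTranspose_one, ← submatrix_mul _ _ _ _ _ Function.bijective_id,
    Matrix.one_mul, submatrix_one_embedding]

structure IsOperatorSystem_s12 {ι : Type*} [Fintype ι] [DecidableEq ι]
    (V : Submodule ℂ (Matrix ι ι ℂ)) : Prop where
  one_mem : (1 : Matrix ι ι ℂ) ∈ V
  conjTranspose_mem : ∀ A ∈ V, Aᴴ ∈ V

namespace IsOperatorSystem_s12

variable {ι κ : Type*} [Fintype ι] [DecidableEq ι] [Fintype κ] [DecidableEq κ]
  {V : Submodule ℂ (Matrix ι ι ℂ)}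

lemma map_compress (hV : IsOperatorSystem_s12 V) {J : Matrix ι κ ℂ} (hJ : Jᴴ * J = 1) :
    IsOperatorSystem_s12 (V.map J.compress) where
  one_mem := ⟨1, hV.one_mem, compress_one hJ⟩
  conjTranspose_mem := by
    rintro _ ⟨X, hX, rfl⟩
    exact ⟨Xᴴ, hV.conjTranspose_mem X hX, compress_conjTranspose J X⟩

lemma exists_isHermitian_notMem (hV : IsOperatorSystem_s12 V) {W : Submodule ℂ (Matrix ι ι ℂ)}
    (hVW : ¬ V ≤ W) : ∃ H ∈ V, H.IsHermitian ∧ H ∉ W := by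
  contrapose! hVW
  intro X hX
  have hadd : X + star X ∈ V := V.add_mem hX (hV.conjTranspose_mem X hX)
  have hsub : X - star X ∈ V := V.sub_mem hX (hV.conjTranspose_mem X hX)
  have hre : (ℜ X : Matrix ι ι ℂ) ∈ W :=
    hVW _ (by rw [realPart_apply_coe]; exact V.smul_of_tower_mem _ hadd) (ℜ X).2
  have him : (ℑ X : Matrix ι ι ℂ) ∈ W :=
    hVW _ (by rw [imaginaryPart_apply_coe]; exact V.smul_mem _ (V.smul_of_tower_mem _ hsub))
      (ℑ X).2
  rw [← realPart_add_I_smul_imaginaryPart X]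
  exact W.add_mem hre (W.smul_mem _ him)

lemma exists_isHermitian_min_finrank_le (hV : IsOperatorSystem_s12 V)
    (W : Submodule ℂ (Matrix ι ι ℂ)) :
    ∃ H ∈ V, H.IsHermitian ∧ min (finrank ℂ W + 1) (finrank ℂ V) ≤ finrank ℂ ↥(W ⊔ ℂ ∙ H) := by
  by_cases hVW : V ≤ W
  · refine ⟨0, V.zero_mem, isHermitian_zero, ?_⟩
    have := finrank_mono hVW
    have := finrank_mono (le_sup_left : W ≤ W ⊔ ℂ ∙ 0)
    omega
  · obtain ⟨H, hHV, hH, hHW⟩ := hV.exists_isHermitian_notMem hVW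
    have := finrank_lt_finrank_of_lt (lt_sup_iff_notMem.mpr hHW)
    exact ⟨H, hHV, hH, by omega⟩

lemma exists_mem_min_finrank_span_le [Nonempty ι] (hV : IsOperatorSystem_s12 V) :
    ∃ A ∈ V, min 3 (finrank ℂ V) ≤ finrank ℂ (span ℂ {1, A, Aᴴ}) := by
  obtain ⟨H₁, hH₁V, hH₁, h₁⟩ := hV.exists_isHermitian_min_finrank_le (ℂ ∙ 1)
  obtain ⟨H₂, hH₂V, hH₂, h₂⟩ := hV.exists_isHermitian_min_finrank_le ((ℂ ∙ 1) ⊔ ℂ ∙ H₁)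
  set A := H₁ + Complex.I • H₂
  have hA : Aᴴ = H₁ - Complex.I • H₂ := by
    simp [A, hH₁.eq, hH₂.eq, sub_eq_add_neg]
  have hle : (ℂ ∙ 1) ⊔ (ℂ ∙ H₁) ⊔ (ℂ ∙ H₂) ≤ span ℂ {1, A, Aᴴ} := by
    have hmem : ∀ X ∈ ({1, A, Aᴴ} : Set (Matrix ι ι ℂ)), X ∈ span ℂ {1, A, Aᴴ} :=
      fun X hX => subset_span hX
    have hsum : A + Aᴴ = (2 : ℂ) • H₁ := by rw [hA]; module
    have hdiff : A - Aᴴ = (2 * Complex.I) • H₂ := by rw [hA]; module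
    simp only [sup_le_iff, span_singleton_le_iff_mem]
    refine ⟨⟨hmem 1 (by simp), ?_⟩, ?_⟩
    · rw [← smul_mem_iff _ (two_ne_zero : (2 : ℂ) ≠ 0), ← hsum]
      exact add_mem (hmem A (by simp)) (hmem Aᴴ (by simp))
    · rw [← smul_mem_iff _ (mul_ne_zero two_ne_zero Complex.I_ne_zero), ← hdiff]
      exact sub_mem (hmem A (by simp)) (hmem Aᴴ (by simp))
  have h1 : finrank ℂ (ℂ ∙ (1 : Matrix ι ι ℂ)) = 1 := finrank_span_singleton one_ne_zero
  have := finrank_mono hle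
  exact ⟨A, add_mem hH₁V (V.smul_mem _ hH₂V), by omega⟩

end IsOperatorSystem_s12

lemma Matrix.map_compress_span_le_span_one {ι κ : Type*} [Fintype ι] [DecidableEq ι]
    [DecidableEq κ] {J : Matrix ι κ ℂ} (hJ : Jᴴ * J = 1) {A : Matrix ι ι ℂ} {μ : ℂ}
    (hA : J.compress A = μ • 1) :
    (span ℂ {1, A, Aᴴ}).map J.compress ≤ ℂ ∙ 1 := by
  rw [map_span, span_le]
  rintro _ ⟨X, hX, rfl⟩
  simp only [Set.mem_insert_iff, Set.mem_singleton_iff] at hX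
  rcases hX with rfl | rfl | rfl
  · rw [compress_one hJ]
    exact mem_span_singleton_self 1
  · exact mem_span_singleton.mpr ⟨μ, hA.symm⟩
  · rw [compress_conjTranspose, hA, conjTranspose_smul, conjTranspose_one]
    exact mem_span_singleton.mpr ⟨star μ, rfl⟩

theorem exists_isometry_map_compress_le_span_one
    (LPS : ∀ (n k : ℕ), 3 * k ≤ n + 2 → ∀ A : Matrix (Fin n) (Fin n) ℂ,
      ∃ J : Matrix (Fin n) (Fin k) ℂ, Jᴴ * J = 1 ∧
        ∃ mu : ℂ, Jᴴ * A * J = mu • (1 : Matrix (Fin k) (Fin k) ℂ))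
    (l : ℕ) {n k : ℕ} (hnk : 3 ^ l * (k - 1) < n) {V : Submodule ℂ (Matrix (Fin n) (Fin n) ℂ)}
    (hV : IsOperatorSystem_s12 V) (hdim : finrank ℂ V ≤ 2 * l + 1) :
    ∃ J : Matrix (Fin n) (Fin k) ℂ, Jᴴ * J = 1 ∧ V.map J.compress ≤ ℂ ∙ 1 := by
  have hone {m : ℕ} [NeZero m] : finrank ℂ (ℂ ∙ (1 : Matrix (Fin m) (Fin m) ℂ)) = 1 :=
    finrank_span_singleton one_ne_zero
  induction l generalizing n V with
  | zero =>
    have : NeZero n := ⟨by omega⟩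
    obtain ⟨J, hJ⟩ :=
      exists_conjTranspose_mul_self_eq_one (R := ℂ) (Fin.castLEEmb (by omega : k ≤ n))
    have hV1 : V = ℂ ∙ 1 :=
      (eq_of_le_of_finrank_le ((span_singleton_le_iff_mem _ _).mpr hV.one_mem)
        (by rw [hone]; simpa using hdim)).symm
    refine ⟨J, hJ, ?_⟩
    rw [hV1, map_span, Set.image_singleton, compress_one hJ]
  | succ l ih =>
    have : NeZero n := ⟨by omega⟩
    obtain ⟨A, hAV, hA⟩ := hV.exists_mem_min_finrank_span_le
    obtain ⟨J₁, hJ₁, μ, hμ⟩ :=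
      LPS n (3 ^ l * (k - 1) + 1) (by rw [pow_succ', mul_assoc] at hnk; omega) A
    have hSV : span ℂ {1, A, Aᴴ} ≤ V := by
      rw [span_le, Set.insert_subset_iff, Set.insert_subset_iff, Set.singleton_subset_iff]
      exact ⟨hV.one_mem, hAV, hV.conjTranspose_mem A hAV⟩
    have hdimW :=
      finrank_map_add_finrank_le J₁.compress hSV (map_compress_span_le_span_one hJ₁ hμ)
    obtain ⟨J₂, hJ₂, hJ₂W⟩ := ih (by omega) (hV.map_compress hJ₁) (by rw [hone] at hdimW; omega)
    refine ⟨J₁ * J₂, ?_, ?_⟩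
    · rw [conjTranspose_mul, Matrix.mul_assoc, ← Matrix.mul_assoc J₁ᴴ, hJ₁, Matrix.one_mul, hJ₂]
    · rwa [compress_mul, map_comp]

open scoped ComplexOrder in
lemma exists_anticlique_of_map_compress_le {ι κ : Type*} [Fintype ι] [DecidableEq ι]
    [Fintype κ] [DecidableEq κ] {V : Submodule ℂ (Matrix ι ι ℂ)} (h1 : (1 : Matrix ι ι ℂ) ∈ V)
    {J : Matrix ι κ ℂ} (hJ : Jᴴ * J = 1) (hVJ : V.map J.compress ≤ ℂ ∙ 1) :
    ∃ P : Matrix ι ι ℂ, Pᴴ = P ∧ P * P = P ∧ P.rank = Fintype.card κ ∧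
      (fun A => P * A * P) '' (V : Set (Matrix ι ι ℂ)) = span ℂ {P} := by
  have hP : (J * Jᴴ)ᴴ = J * Jᴴ := by rw [conjTranspose_mul, conjTranspose_conjTranspose]
  have hV : V.map J.compress = ℂ ∙ 1 :=
    le_antisymm hVJ ((span_singleton_le_iff_mem _ _).mpr ⟨1, h1, compress_one hJ⟩)
  refine ⟨J * Jᴴ, hP, ?_, ?_, ?_⟩
  · rw [Matrix.mul_assoc, ← Matrix.mul_assoc Jᴴ, hJ, Matrix.one_mul]
  · rw [rank_self_mul_conjTranspose, ← rank_conjTranspose_mul_self, hJ, rank_one]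
  · calc (fun A => J * Jᴴ * A * (J * Jᴴ)) '' (V : Set (Matrix ι ι ℂ))
        = V.map (J * Jᴴ).compress := by
          rw [map_coe]
          congr 1
          funext A
          rw [compress_apply, hP]
      _ = span ℂ {J * Jᴴ} := by
        rw [compress_mul, map_comp, hV, map_span, Set.image_singleton, compress_apply,
          conjTranspose_conjTranspose, Matrix.mul_one]

open Matrix in
theorem stmt_12
    (LPS : ∀ (n k : ℕ), 3 * k ≤ n + 2 → ∀ A : Matrix (Fin n) (Fin n) ℂ,
      ∃ J : Matrix (Fin n) (Fin k) ℂ, Jᴴ * J = 1 ∧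
        ∃ mu : ℂ, Jᴴ * A * J = mu • (1 : Matrix (Fin k) (Fin k) ℂ)) :
    ∀ (l n k : ℕ), 3 ^ l * (k - 1) < n →
    ∀ V : Submodule ℂ (Matrix (Fin n) (Fin n) ℂ),
      (1 : Matrix (Fin n) (Fin n) ℂ) ∈ V → (∀ A ∈ V, Aᴴ ∈ V) →
      Module.finrank ℂ V ≤ 2 * l + 1 →
      ∃ P : Matrix (Fin n) (Fin n) ℂ, Pᴴ = P ∧ P * P = P ∧ P.rank = k ∧
        (fun A => P * A * P) '' (V : Set (Matrix (Fin n) (Fin n) ℂ)) =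
          (Submodule.span ℂ {P} : Submodule ℂ (Matrix (Fin n) (Fin n) ℂ)) := by
  intro l n k hnk V h1 hstar hdim
  obtain ⟨J, hJ, hVJ⟩ := exists_isometry_map_compress_le_span_one LPS l hnk ⟨h1, hstar⟩ hdim
  simpa only [Fintype.card_fin] using exists_anticlique_of_map_compress_le h1 hJ hVJ
end
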